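/- arXiv:2602.10782 — 4 statements merged into one kernel-verified Lean document; each statement's English description precedes it below -/
import Mathlib

section
/- Let n ≥ 1, let I_1 < I_2 < ... < I_n be labels (identify I_k with k), and suppose there are heirs H_1 < H_2 < ... < H_ℓ together with ghosts, where the heirs are maximal intervals [a,b] ⊆ [1,n+1] partitioning the junctions, each ghost g being an interior junction of its heir interval heir(g). If π is a bijection from {1,...,n} to the set of roles (heirs and ghosts) satisfying (i) heir ordering: π⁻¹(H_1) < π⁻¹(H_2) < ... < π⁻¹(H_ℓ), and (ii) the ghost constraint: for each ghost g with H = heir(g), exactly one of (g < π⁻¹(g) < π⁻¹(H)) or (π⁻¹(H) < π⁻¹(g) < g) holds (where an interval [a,b] is compared to a junction j by [a,b] < j iff b ≤ j, and j < [a,b] iff j ≤ a), then ℓ = n, there are no ghosts, and π(I_k) = H_k for every k. -/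
/-- "No ghosts allowed" lemma. Actors are `Fin n`, with actor `i` representing the
interval `[i+1, i+2]` (1-indexed particles `I_k = [k, k+1]`). Heirs are intervals
`[a j, b j]` partitioning `[1, n+1]`, and ghosts are interior junctions of heirs.
Order conventions: interval `[x,y] ◁ j ↔ y ≤ j`, `j ◁ [x,y] ↔ j ≤ x`. -/
theorem no_ghosts_allowed
    (n ℓ : ℕ) (hn : 1 ≤ n) (hℓ : 1 ≤ ℓ)
    (a b : Fin ℓ → ℕ)
    (hab : ∀ j, a j < b j)
    (ha1 : a ⟨0, hℓ⟩ = 1)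
    (hbn : b ⟨ℓ - 1, by omega⟩ = n + 1)
    (hchain : ∀ (j : Fin ℓ) (hj : (j : ℕ) + 1 < ℓ), b j = a ⟨(j : ℕ) + 1, hj⟩)
    (isGhost : ℕ → Prop)
    (hGhost : ∀ g, isGhost g ↔ ∃ j : Fin ℓ, a j < g ∧ g < b j)
    (heirOf : {g : ℕ // isGhost g} → Fin ℓ)
    (hheirOf : ∀ g : {g : ℕ // isGhost g}, a (heirOf g) < g.1 ∧ g.1 < b (heirOf g))
    (π : Fin n ≃ (Fin ℓ ⊕ {g : ℕ // isGhost g}))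
    -- heir ordering: π⁻¹(H_1) ◁ π⁻¹(H_2) ◁ ⋯ ◁ π⁻¹(H_ℓ)
    (hHeirOrder : StrictMono fun j : Fin ℓ => π.symm (Sum.inl j))
    -- ghost constraint: exactly one of (g ◁ π⁻¹(g) ◁ π⁻¹(heir g)) or
    -- (π⁻¹(heir g) ◁ π⁻¹(g) ◁ g)
    (hGhostCon : ∀ g : {g : ℕ // isGhost g},
      Xor'
        (g.1 ≤ (π.symm (Sum.inr g) : ℕ) + 1 ∧
          π.symm (Sum.inr g) < π.symm (Sum.inl (heirOf g)))
        (π.symm (Sum.inl (heirOf g)) < π.symm (Sum.inr g) ∧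
          (π.symm (Sum.inr g) : ℕ) + 2 ≤ g.1)) :
    ℓ = n ∧ (∀ g, ¬ isGhost g) ∧
      ∀ j : Fin ℓ, (π.symm (Sum.inl j) : ℕ) = (j : ℕ) := by
  classical
  -- basic chain facts
  have hblea : ∀ (k : ℕ) (hk : k < ℓ) (i : Fin ℓ), (i : ℕ) < k → b i ≤ a ⟨k, hk⟩ := by
    intro k
    induction k with
    | zero => intro hk i hi; omega
    | succ m ih =>
      intro hk i hi
      have hm : m < ℓ := by omega
      have hch : b ⟨m, hm⟩ = a ⟨m + 1, hk⟩ := hchain ⟨m, hm⟩ hk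
      rcases Nat.lt_or_ge (i : ℕ) m with h | h
      · have h1 := ih hm i h
        have h2 := hab ⟨m, hm⟩
        omega
      · have hieq : i = ⟨m, hm⟩ := Fin.ext (show (i : ℕ) = m by omega)
        rw [hieq, hch]
  have hba : ∀ {i i' : Fin ℓ}, i < i' → b i ≤ a i' := by
    intro i i' h
    have := hblea i'.val i'.isLt i h
    simpa using this
  have haa : ∀ {i i' : Fin ℓ}, i < i' → a i < a i' := by
    intro i i' h; exact lt_of_lt_of_le (hab i) (hba h)
  have hbb : ∀ {i i' : Fin ℓ}, i < i' → b i < b i' := by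
    intro i i' h; exact lt_of_le_of_lt (hba h) (hab i')
  have hale : ∀ {i i' : Fin ℓ}, i ≤ i' → a i ≤ a i' := by
    intro i i' h
    rcases eq_or_lt_of_le h with h' | h'
    · rw [h']
    · exact le_of_lt (haa h')
  have hble : ∀ {i i' : Fin ℓ}, i ≤ i' → b i ≤ b i' := by
    intro i i' h
    rcases eq_or_lt_of_le h with h' | h'
    · rw [h']
    · exact le_of_lt (hbb h')
  have ha1' : ∀ i : Fin ℓ, 1 ≤ a i := by
    intro i
    have h0 : (⟨0, hℓ⟩ : Fin ℓ) ≤ i := by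
      simp [Fin.le_def]
    have := hale h0
    omega
  have hbn' : ∀ i : Fin ℓ, b i ≤ n + 1 := by
    intro i
    have hl : i ≤ (⟨ℓ - 1, by omega⟩ : Fin ℓ) := by
      have := i.isLt
      simp [Fin.le_def]
      omega
    have := hble hl
    omega
  have han : ∀ i : Fin ℓ, a i ≤ n := by
    intro i
    have h1 := hab i
    have h2 := hbn' i
    omega
  -- junctions which are not left endpoints are ghosts
  have hghostex : ∀ v : ℕ, 1 ≤ v → v ≤ n → (∀ i : Fin ℓ, a i ≠ v) → isGhost v := by
    intro v h1v hvn hne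
    rw [hGhost]
    set S : Finset (Fin ℓ) := Finset.univ.filter (fun i => a i ≤ v) with hS
    have hS0 : (⟨0, hℓ⟩ : Fin ℓ) ∈ S := by
      simp only [hS, Finset.mem_filter, Finset.mem_univ, true_and, ha1]
      omega
    have hSne : S.Nonempty := ⟨_, hS0⟩
    set i := S.max' hSne with hi
    have hiS : i ∈ S := S.max'_mem hSne
    have hav : a i ≤ v := by
      simpa [hS] using hiS
    have hav' : a i < v := lt_of_le_of_ne hav (hne i)
    refine ⟨i, hav', ?_⟩
    by_cases hlt : (i : ℕ) + 1 < ℓ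
    · have hch := hchain i hlt
      by_contra hbv
      push_neg at hbv
      have hmem : (⟨(i : ℕ) + 1, hlt⟩ : Fin ℓ) ∈ S := by
        simp [hS]
        omega
      have := S.le_max' _ hmem
      rw [← hi, Fin.le_def] at this
      simp at this
    · have hieq : i = ⟨ℓ - 1, by omega⟩ := Fin.ext (show (i : ℕ) = ℓ - 1 by have := i.isLt; omega)
      rw [hieq, hbn]
      omega
  haveI : Fintype {g : ℕ // isGhost g} :=
    Fintype.ofInjective (fun g : {g : ℕ // isGhost g} => π.symm (Sum.inr g))
      (fun g g' h => Sum.inr_injective (π.symm.injective h))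
  -- lower bound on heir positions
  have hL1 : ∀ j : Fin ℓ, a j ≤ (π.symm (Sum.inl j) : ℕ) + 1 := by
    intro j
    by_contra hcon
    push_neg at hcon
    have key : (Finset.Icc 1 (a j)).card ≤
        (Finset.univ.filter (fun p : Fin n => (p : ℕ) + 2 ≤ a j)).card := by
      apply Finset.card_le_card_of_injOn
        (fun v => if h1 : ∃ i : Fin ℓ, a i = v then π.symm (Sum.inl h1.choose)
          else if h2 : isGhost v then π.symm (Sum.inr ⟨v, h2⟩) else π.symm (Sum.inl j))
      · intro v hv
        rw [Finset.mem_coe] at hv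
        beta_reduce
        simp only [Finset.mem_Icc] at hv
        by_cases h1 : ∃ i : Fin ℓ, a i = v
        · rw [dif_pos h1]
          have hia : a h1.choose = v := h1.choose_spec
          have hij : h1.choose ≤ j := by
            by_contra hlt
            push_neg at hlt
            have := haa hlt
            omega
          have hcle := hHeirOrder.monotone hij
          rw [Fin.le_def] at hcle
          simp only [Finset.mem_coe, Finset.mem_filter, Finset.mem_univ, true_and]
          omega
        · have hg : isGhost v := by
            apply hghostex v hv.1 (le_trans hv.2 (han j))
            intro i hiv
            exact h1 ⟨i, hiv⟩
          rw [dif_neg h1, dif_pos hg]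
          have hh := hheirOf ⟨v, hg⟩
          have hvv : ((⟨v, hg⟩ : {g : ℕ // isGhost g}) : ℕ) = v := rfl
          have hij : heirOf ⟨v, hg⟩ < j := by
            by_contra hle
            push_neg at hle
            have := hale hle
            omega
          have hcc : (π.symm (Sum.inl (heirOf ⟨v, hg⟩)) : ℕ) < (π.symm (Sum.inl j) : ℕ) :=
            hHeirOrder hij
          simp only [Finset.mem_coe, Finset.mem_filter, Finset.mem_univ, true_and]
          rcases hGhostCon ⟨v, hg⟩ with ⟨⟨hA1, hA2⟩, -⟩ | ⟨⟨hB1, hB2⟩, -⟩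
          · rw [Fin.lt_def] at hA2
            omega
          · omega
      · intro v hv v' hv' heq
        simp only [] at heq
        simp only [Finset.coe_Icc, Set.mem_Icc] at hv hv'
        by_cases h1 : ∃ i : Fin ℓ, a i = v <;> by_cases h1' : ∃ i : Fin ℓ, a i = v'
        · rw [dif_pos h1, dif_pos h1'] at heq
          have := π.symm.injective heq
          simp only [Sum.inl.injEq] at this
          rw [← h1.choose_spec, ← h1'.choose_spec, this]
        · have hg' : isGhost v' := by
            apply hghostex v' hv'.1 (le_trans hv'.2 (han j))
            intro i hiv
            exact h1' ⟨i, hiv⟩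
          rw [dif_pos h1, dif_neg h1', dif_pos hg'] at heq
          exact absurd (π.symm.injective heq) (by simp)
        · have hg : isGhost v := by
            apply hghostex v hv.1 (le_trans hv.2 (han j))
            intro i hiv
            exact h1 ⟨i, hiv⟩
          rw [dif_neg h1, dif_pos hg, dif_pos h1'] at heq
          exact absurd (π.symm.injective heq) (by simp)
        · have hg : isGhost v := by
            apply hghostex v hv.1 (le_trans hv.2 (han j))
            intro i hiv
            exact h1 ⟨i, hiv⟩
          have hg' : isGhost v' := by
            apply hghostex v' hv'.1 (le_trans hv'.2 (han j))
            intro i hiv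
            exact h1' ⟨i, hiv⟩
          rw [dif_neg h1, dif_pos hg, dif_neg h1', dif_pos hg'] at heq
          have := π.symm.injective heq
          simpa using this
    have hcard1 : (Finset.Icc 1 (a j)).card = a j := by
      rw [Nat.card_Icc]
      omega
    have hcard2 : (Finset.univ.filter (fun p : Fin n => (p : ℕ) + 2 ≤ a j)).card ≤ a j - 1 := by
      have := Finset.card_le_card_of_injOn (fun p : Fin n => (p : ℕ))
        (s := Finset.univ.filter (fun p : Fin n => (p : ℕ) + 2 ≤ a j))
        (t := Finset.range (a j - 1))
        (fun p hp => by
          simp only [Finset.mem_coe, Finset.mem_filter, Finset.mem_univ, true_and] at hp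
          simp only [Finset.mem_coe, Finset.mem_range]
          omega)
        (fun p hp q hq h => Fin.ext h)
      simpa using this
    have := ha1' j
    omega
  -- upper bound on heir positions
  have hL2 : ∀ j : Fin ℓ, (π.symm (Sum.inl j) : ℕ) + 2 ≤ b j := by
    intro j
    by_contra hcon
    push_neg at hcon
    have key : (Finset.Icc (b j) (n + 1)).card ≤
        (Finset.univ.filter (fun p : Fin n => b j ≤ (p : ℕ) + 1)).card := by
      apply Finset.card_le_card_of_injOn
        (fun v => if h1 : ∃ i : Fin ℓ, b i = v then π.symm (Sum.inl h1.choose)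
          else if h2 : isGhost v then π.symm (Sum.inr ⟨v, h2⟩) else π.symm (Sum.inl j))
      · intro v hv
        rw [Finset.mem_coe] at hv
        beta_reduce
        simp only [Finset.mem_Icc] at hv
        have hbj2 : 2 ≤ b j := by
          have := hab j
          have := ha1' j
          omega
        by_cases h1 : ∃ i : Fin ℓ, b i = v
        · rw [dif_pos h1]
          have hib : b h1.choose = v := h1.choose_spec
          have hij : j ≤ h1.choose := by
            by_contra hlt
            push_neg at hlt
            have := hbb hlt
            omega
          have hcle := hHeirOrder.monotone hij
          rw [Fin.le_def] at hcle
          simp only [Finset.mem_coe, Finset.mem_filter, Finset.mem_univ, true_and]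
          omega
        · have hna : ∀ i : Fin ℓ, a i ≠ v := by
            intro i hiv
            rcases Nat.eq_zero_or_pos (i : ℕ) with h0 | h0
            · have : i = ⟨0, hℓ⟩ := Fin.ext h0
              rw [this, ha1] at hiv
              omega
            · have hlt : (i : ℕ) - 1 + 1 < ℓ := by have := i.isLt; omega
              have hch := hchain ⟨(i : ℕ) - 1, by omega⟩ hlt
              have : (⟨(i : ℕ) - 1 + 1, hlt⟩ : Fin ℓ) = i := Fin.ext (by simp; omega)
              rw [this] at hch
              exact h1 ⟨⟨(i : ℕ) - 1, by omega⟩, by rw [hch]; exact hiv⟩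
          have hvn : v ≤ n := by
            rcases eq_or_lt_of_le hv.2 with h | h
            · exact absurd (⟨⟨ℓ - 1, by omega⟩, by rw [hbn, h]⟩ : ∃ i : Fin ℓ, b i = v) h1
            · omega
          have hg : isGhost v := hghostex v (by omega) hvn hna
          rw [dif_neg h1, dif_pos hg]
          have hh := hheirOf ⟨v, hg⟩
          have hvv : ((⟨v, hg⟩ : {g : ℕ // isGhost g}) : ℕ) = v := rfl
          have hij : j < heirOf ⟨v, hg⟩ := by
            by_contra hle
            push_neg at hle
            have := hble hle
            omega
          have hcc : (π.symm (Sum.inl j) : ℕ) < (π.symm (Sum.inl (heirOf ⟨v, hg⟩)) : ℕ) :=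
            hHeirOrder hij
          simp only [Finset.mem_coe, Finset.mem_filter, Finset.mem_univ, true_and]
          rcases hGhostCon ⟨v, hg⟩ with ⟨⟨hA1, hA2⟩, -⟩ | ⟨⟨hB1, hB2⟩, -⟩
          · omega
          · rw [Fin.lt_def] at hB1
            omega
      · intro v hv v' hv' heq
        simp only [] at heq
        simp only [Finset.coe_Icc, Set.mem_Icc] at hv hv'
        have hgen : ∀ w : ℕ, b j ≤ w → w ≤ n + 1 → (¬ ∃ i : Fin ℓ, b i = w) → isGhost w := by
          intro w hw1 hw2 hne
          have hbj2 : 2 ≤ b j := by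
            have := hab j
            have := ha1' j
            omega
          have hna : ∀ i : Fin ℓ, a i ≠ w := by
            intro i hiv
            rcases Nat.eq_zero_or_pos (i : ℕ) with h0 | h0
            · have : i = ⟨0, hℓ⟩ := Fin.ext h0
              rw [this, ha1] at hiv
              omega
            · have hlt : (i : ℕ) - 1 + 1 < ℓ := by have := i.isLt; omega
              have hch := hchain ⟨(i : ℕ) - 1, by omega⟩ hlt
              have : (⟨(i : ℕ) - 1 + 1, hlt⟩ : Fin ℓ) = i := Fin.ext (by simp; omega)
              rw [this] at hch
              exact hne ⟨⟨(i : ℕ) - 1, by omega⟩, by rw [hch]; exact hiv⟩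
          have hvn : w ≤ n := by
            rcases eq_or_lt_of_le hw2 with h | h
            · exact absurd (⟨⟨ℓ - 1, by omega⟩, by rw [hbn, h]⟩ : ∃ i : Fin ℓ, b i = w) hne
            · omega
          exact hghostex w (by omega) hvn hna
        by_cases h1 : ∃ i : Fin ℓ, b i = v <;> by_cases h1' : ∃ i : Fin ℓ, b i = v'
        · rw [dif_pos h1, dif_pos h1'] at heq
          have := π.symm.injective heq
          simp only [Sum.inl.injEq] at this
          rw [← h1.choose_spec, ← h1'.choose_spec, this]
        · have hg' : isGhost v' := hgen v' hv'.1 hv'.2 h1'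
          rw [dif_pos h1, dif_neg h1', dif_pos hg'] at heq
          exact absurd (π.symm.injective heq) (by simp)
        · have hg : isGhost v := hgen v hv.1 hv.2 h1
          rw [dif_neg h1, dif_pos hg, dif_pos h1'] at heq
          exact absurd (π.symm.injective heq) (by simp)
        · have hg : isGhost v := hgen v hv.1 hv.2 h1
          have hg' : isGhost v' := hgen v' hv'.1 hv'.2 h1'
          rw [dif_neg h1, dif_pos hg, dif_neg h1', dif_pos hg'] at heq
          have := π.symm.injective heq
          simpa using this
    have hcard1 : (Finset.Icc (b j) (n + 1)).card = n + 2 - b j := by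
      rw [Nat.card_Icc]
    have hcard2 : (Finset.univ.filter (fun p : Fin n => b j ≤ (p : ℕ) + 1)).card
        ≤ n + 1 - b j := by
      have := Finset.card_le_card_of_injOn (fun p : Fin n => (p : ℕ) - (b j - 1))
        (s := Finset.univ.filter (fun p : Fin n => b j ≤ (p : ℕ) + 1))
        (t := Finset.range (n + 1 - b j))
        (fun p hp => by
          simp only [Finset.mem_coe, Finset.mem_filter, Finset.mem_univ, true_and] at hp
          simp only [Finset.mem_coe, Finset.mem_range]
          have := p.isLt
          omega)
        (fun p hp q hq h => by
          simp only [] at h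
          simp only [Finset.mem_coe, Finset.mem_filter, Finset.mem_univ, true_and] at hp hq
          exact Fin.ext (by omega))
      simpa using this
    have := hbn' j
    omega
  -- exact heir positions
  have hL3 : ∀ j : Fin ℓ, (π.symm (Sum.inl j) : ℕ) + 1 = a j := by
    intro j
    have hjn : a j ≤ n := han j
    have h1j : 1 ≤ a j := ha1' j
    set p : Fin n := ⟨a j - 1, by omega⟩ with hp
    have hpval : (p : ℕ) = a j - 1 := rfl
    rcases hr : π p with i | g
    · have hpi : π.symm (Sum.inl i) = p := by rw [← hr]; exact π.symm_apply_apply p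
      have hci : (π.symm (Sum.inl i) : ℕ) = a j - 1 := by rw [hpi]
      have h1 := hL1 i
      have h2 := hL2 i
      have hij : i = j := by
        by_contra hne
        rcases lt_or_gt_of_ne hne with h | h
        · have := hba h
          omega
        · have := hba h
          have := hab j
          omega
      rw [hij] at hci
      omega
    · exfalso
      have hpg : π.symm (Sum.inr g) = p := by rw [← hr]; exact π.symm_apply_apply p
      have hgval : (π.symm (Sum.inr g) : ℕ) = a j - 1 := by rw [hpg]
      have hh := hheirOf g
      have h1 := hL1 (heirOf g)
      have h2 := hL2 (heirOf g)
      rcases hGhostCon g with ⟨⟨hA1, hA2⟩, -⟩ | ⟨⟨hB1, hB2⟩, -⟩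
      · rw [Fin.lt_def] at hA2
        have hij : heirOf g < j := by
          by_contra hge
          push_neg at hge
          have := hale hge
          omega
        have := hba hij
        omega
      · rw [Fin.lt_def] at hB1
        have hij : j ≤ heirOf g := by
          by_contra hge
          push_neg at hge
          have := hba hge
          omega
        have := hale hij
        omega
  -- no ghosts
  have hL4 : ∀ g, ¬ isGhost g := by
    intro g0 hg0
    have hne : (Finset.univ : Finset {g : ℕ // isGhost g}).Nonempty :=
      ⟨⟨g0, hg0⟩, Finset.mem_univ _⟩
    set P : Finset (Fin n) :=
      Finset.univ.image (fun g : {g : ℕ // isGhost g} => π.symm (Sum.inr g)) with hP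
    have hPne : P.Nonempty := hne.image _
    obtain ⟨g, -, hg⟩ := Finset.mem_image.mp (P.max'_mem hPne)
    have hh := hheirOf g
    have hci := hL3 (heirOf g)
    rcases hGhostCon g with ⟨⟨hA1, hA2⟩, -⟩ | ⟨⟨hB1, hB2⟩, -⟩
    · rw [Fin.lt_def] at hA2
      omega
    · rw [Fin.lt_def] at hB1
      have hbi := hbn' (heirOf g)
      have hq : (π.symm (Sum.inr g) : ℕ) + 1 < n := by omega
      set q : Fin n := ⟨(π.symm (Sum.inr g) : ℕ) + 1, hq⟩ with hqdef
      have hqval : (q : ℕ) = (π.symm (Sum.inr g) : ℕ) + 1 := rfl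
      rcases hrq : π q with i' | g'
      · have hqi : π.symm (Sum.inl i') = q := by rw [← hrq]; exact π.symm_apply_apply q
        have hci' := hL3 i'
        rw [hqi] at hci'
        have hii' : heirOf g < i' := by
          by_contra hle
          push_neg at hle
          have := hale hle
          omega
        have := hba hii'
        omega
      · have hq' : π.symm (Sum.inr g') = q := by rw [← hrq]; exact π.symm_apply_apply q
        have hmem : q ∈ P := Finset.mem_image.mpr ⟨g', Finset.mem_univ _, hq'⟩
        have hle := P.le_max' q hmem
        rw [Fin.le_def] at hle
        have hpval := congrArg Fin.val hg
        omega
  -- conclude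
  have hL5 : ∀ j : Fin ℓ, b j = a j + 1 := by
    intro j
    by_contra hne
    have h1 := hab j
    exact hL4 _ ((hGhost (a j + 1)).mpr ⟨j, by omega, by omega⟩)
  have haval : ∀ (k : ℕ) (hk : k < ℓ), a ⟨k, hk⟩ = k + 1 := by
    intro k
    induction k with
    | zero => intro hk; exact ha1
    | succ m ih =>
      intro hk
      have hm : m < ℓ := by omega
      have hch : b ⟨m, hm⟩ = a ⟨m + 1, hk⟩ := hchain ⟨m, hm⟩ hk
      rw [hL5 ⟨m, hm⟩, ih hm] at hch
      omega
  have hln : ℓ = n := by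
    have h := hbn
    rw [hL5 ⟨ℓ - 1, by omega⟩, haval (ℓ - 1) (by omega)] at h
    omega
  refine ⟨hln, hL4, ?_⟩
  intro j
  have h3 := hL3 j
  have h4 := haval j.val j.isLt
  simp only [Fin.eta] at h4
  omega
end

section
/- With the setup of the 'no ghosts allowed' lemma, prove the inductive invariant: for each k ∈ {0,1,...,n}, any bijection π satisfying the heir-ordering condition and the ghost constraint must satisfy ℓ ≥ k and π(I_j) = H_j for all j ≤ k. -/
/-!
Induction on `k`, in the paper's 1-indexed notation. Suppose `π(I_i) = H_i` for `i ≤ k`. The heirs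
start at `1` and increase, so `H_i` starts at or after `i`; hence the heir of a ghost `g ≤ k + 1` is
some `H_i` with `i ≤ k`, carried by `I_i`, and either side of the ghost constraint puts `π⁻¹(g)` among
`I_1, …, I_k`, which all carry heirs. So no junction `≤ k + 1` is a ghost, which makes
`H_1, …, H_k` the unit intervals `[i, i + 1]`. Now `I_{k+1}` cannot carry a ghost `g`: `g > k + 1`
rules out `g ◁ I_{k+1}`, and otherwise its heir precedes `I_{k+1}`, so it is one of `H_1, …, H_k`
and cannot contain `g`. Hence `I_{k+1}` carries a heir, and the heir ordering makes it `H_{k+1}`.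
-/

section IntervalChain

variable {ℓ : ℕ} {a b : Fin ℓ → ℕ}

theorem succ_le_left_of_chain (hℓ : 1 ≤ ℓ) (hab : ∀ j, a j < b j) (ha1 : a ⟨0, hℓ⟩ = 1)
    (hchain : ∀ (j : Fin ℓ) (hj : (j : ℕ) + 1 < ℓ), b j = a ⟨(j : ℕ) + 1, hj⟩) (j : Fin ℓ) :
    (j : ℕ) + 1 ≤ a j := by
  obtain ⟨i, hi⟩ := j
  dsimp only
  induction i with
  | zero => exact ha1.ge
  | succ i ih =>
    have := hab ⟨i, by omega⟩
    have : b ⟨i, _⟩ = a ⟨i + 1, hi⟩ := hchain ⟨i, by omega⟩ hi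
    have := ih (by omega)
    omega

theorem right_eq_of_left_eq {m : ℕ} (hab : ∀ j, a j < b j)
    (hfree : ∀ j v, a j < v → v < b j → m < v) {j : Fin ℓ} (hj : (j : ℕ) + 1 < m)
    (ha : a j = j + 1) : b j = j + 2 := by
  have := hab j
  by_contra hne
  have := hfree j (j + 2) (by omega) (by omega)
  omega

theorem right_eq_of_lt_interior (hℓ : 1 ≤ ℓ) (hab : ∀ j, a j < b j) (ha1 : a ⟨0, hℓ⟩ = 1)
    (hchain : ∀ (j : Fin ℓ) (hj : (j : ℕ) + 1 < ℓ), b j = a ⟨(j : ℕ) + 1, hj⟩) {m : ℕ}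
    (hfree : ∀ j v, a j < v → v < b j → m < v) (j : Fin ℓ) (hj : (j : ℕ) + 1 < m) :
    b j = j + 2 := by
  obtain ⟨i, hi⟩ := j
  dsimp only at hj ⊢
  induction i with
  | zero => exact right_eq_of_left_eq hab hfree hj ha1
  | succ i ih =>
    refine right_eq_of_left_eq hab hfree hj ?_
    rw [← hchain ⟨i, by omega⟩ hi, ih (by omega) (by omega)]

end IntervalChain

section Placement

variable {n ℓ : ℕ} {G : Type*}

/-- `π(I_j) = H_j` for `j ≤ k`; actors and heirs are 0-indexed here. -/
def FixesHeirsBelow (π : Fin n ≃ Fin ℓ ⊕ G) (k : ℕ) : Prop :=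
  k ≤ ℓ ∧ ∀ j : Fin ℓ, (j : ℕ) < k → (π.symm (Sum.inl j) : ℕ) = j

namespace FixesHeirsBelow

variable {π : Fin n ≃ Fin ℓ ⊕ G} {k : ℕ}

theorem exists_inl_of_symm_lt (h : FixesHeirsBelow π k) {x : Fin ℓ ⊕ G}
    (hx : (π.symm x : ℕ) < k) : ∃ j : Fin ℓ, (j : ℕ) < k ∧ x = Sum.inl j := by
  have hxℓ : (π.symm x : ℕ) < ℓ := by have := h.1; omega
  refine ⟨⟨π.symm x, hxℓ⟩, hx, π.symm.injective (Fin.ext ?_)⟩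
  exact (h.2 ⟨π.symm x, hxℓ⟩ hx).symm

theorem lt_of_symm_inl_lt (h : FixesHeirsBelow π k) {j : Fin ℓ}
    (hj : (π.symm (Sum.inl j) : ℕ) < k) : (j : ℕ) < k := by
  obtain ⟨j', hj', e⟩ := h.exists_inl_of_symm_lt hj
  rwa [Sum.inl_injective e]

theorem le_symm_inr (h : FixesHeirsBelow π k) (g : G) : k ≤ (π.symm (Sum.inr g) : ℕ) := by
  by_contra hg
  obtain ⟨j, -, e⟩ := h.exists_inl_of_symm_lt (not_le.mp hg)
  exact Sum.inr_ne_inl e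

theorem succ (h : FixesHeirsBelow π k) (hmono : StrictMono fun j : Fin ℓ => π.symm (Sum.inl j))
    {hk : k < n} {j : Fin ℓ} (hπk : π ⟨k, hk⟩ = Sum.inl j) : FixesHeirsBelow π (k + 1) := by
  have hj : π.symm (Sum.inl j) = ⟨k, hk⟩ := π.symm_apply_eq.mpr hπk.symm
  have hkj : k ≤ j := by
    by_contra hjk
    have := h.2 j (not_le.mp hjk)
    rw [hj, Fin.val_mk] at this
    omega
  have hjk : (j : ℕ) = k := by
    by_contra hne
    have hlt := hmono (show (⟨k, by omega⟩ : Fin ℓ) < j from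
      Fin.lt_def.mpr (lt_of_le_of_ne hkj (Ne.symm hne)))
    simp only [hj] at hlt
    exact lt_irrefl k (h.lt_of_symm_inl_lt hlt)
  refine ⟨by omega, fun i hi => ?_⟩
  rcases Nat.lt_succ_iff_lt_or_eq.mp hi with hi | hi
  · exact h.2 i hi
  · rw [show i = j from Fin.ext (by omega), hj, hjk]

end FixesHeirsBelow

end Placement

section Ghosts

variable {n ℓ : ℕ} {isGhost : ℕ → Prop}

def SatisfiesGhostConstraint (π : Fin n ≃ Fin ℓ ⊕ {g : ℕ // isGhost g})
    (heirOf : {g : ℕ // isGhost g} → Fin ℓ) : Prop :=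
  ∀ g : {g : ℕ // isGhost g},
    (g.1 ≤ (π.symm (Sum.inr g) : ℕ) + 1 ∧ π.symm (Sum.inr g) < π.symm (Sum.inl (heirOf g))) ∨
      (π.symm (Sum.inl (heirOf g)) < π.symm (Sum.inr g) ∧ (π.symm (Sum.inr g) : ℕ) + 2 ≤ g.1)

namespace FixesHeirsBelow

variable {heirOf : {g : ℕ // isGhost g} → Fin ℓ} {π : Fin n ≃ Fin ℓ ⊕ {g : ℕ // isGhost g}}
  {k : ℕ}

theorem add_one_lt_ghost (h : FixesHeirsBelow π k) (hcon : SatisfiesGhostConstraint π heirOf)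
    (hheir : ∀ g, (heirOf g : ℕ) + 2 ≤ g.1) (g : {g : ℕ // isGhost g}) : k + 1 < g.1 := by
  by_contra hg
  have := hheir g
  have hpos := h.2 (heirOf g) (by omega)
  have := h.le_symm_inr g
  rcases hcon g with ⟨-, hlt⟩ | ⟨-, hle⟩
  · have := Fin.lt_def.mp hlt
    omega
  · omega

theorem exists_apply_eq_inl (h : FixesHeirsBelow π k) (hcon : SatisfiesGhostConstraint π heirOf)
    (hheir : ∀ g, (heirOf g : ℕ) + 2 ≤ g.1) (hshort : ∀ g, (heirOf g : ℕ) < k → g.1 ≤ k + 1)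
    (hk : k < n) : ∃ j, π ⟨k, hk⟩ = Sum.inl j := by
  rcases hx : π ⟨k, hk⟩ with j | g
  · exact ⟨j, rfl⟩
  have hg : π.symm (Sum.inr g) = ⟨k, hk⟩ := π.symm_apply_eq.mpr hx.symm
  have := h.add_one_lt_ghost hcon hheir g
  rcases hcon g with ⟨hle, -⟩ | ⟨hlt, -⟩
  · rw [hg, Fin.val_mk] at hle
    omega
  · rw [hg] at hlt
    have := hshort g (h.lt_of_symm_inl_lt hlt)
    omega

end FixesHeirsBelow

end Ghosts

/-- "No ghosts allowed" lemma. Actors are `Fin n`, with actor `i` representing the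
interval `[i+1, i+2]` (1-indexed particles `I_k = [k, k+1]`). Heirs are intervals
`[a j, b j]` partitioning `[1, n+1]`, and ghosts are interior junctions of heirs.
Order conventions: interval `[x,y] ◁ j ↔ y ≤ j`, `j ◁ [x,y] ↔ j ≤ x`. -/
theorem no_ghosts_invariant
    (n ℓ : ℕ) (hℓ : 1 ≤ ℓ)
    (a b : Fin ℓ → ℕ)
    (hab : ∀ j, a j < b j)
    (ha1 : a ⟨0, hℓ⟩ = 1)
    (hchain : ∀ (j : Fin ℓ) (hj : (j : ℕ) + 1 < ℓ), b j = a ⟨(j : ℕ) + 1, hj⟩)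
    (isGhost : ℕ → Prop)
    (hGhost : ∀ g, isGhost g ↔ ∃ j : Fin ℓ, a j < g ∧ g < b j)
    (heirOf : {g : ℕ // isGhost g} → Fin ℓ)
    (hheirOf : ∀ g : {g : ℕ // isGhost g}, a (heirOf g) < g.1 ∧ g.1 < b (heirOf g))
    (π : Fin n ≃ (Fin ℓ ⊕ {g : ℕ // isGhost g}))
    -- heir ordering: π⁻¹(H_1) ◁ π⁻¹(H_2) ◁ ⋯ ◁ π⁻¹(H_ℓ)
    (hHeirOrder : StrictMono fun j : Fin ℓ => π.symm (Sum.inl j))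
    -- ghost constraint: exactly one of (g ◁ π⁻¹(g) ◁ π⁻¹(heir g)) or
    -- (π⁻¹(heir g) ◁ π⁻¹(g) ◁ g)
    (hGhostCon : ∀ g : {g : ℕ // isGhost g},
      Xor'
        (g.1 ≤ (π.symm (Sum.inr g) : ℕ) + 1 ∧
          π.symm (Sum.inr g) < π.symm (Sum.inl (heirOf g)))
        (π.symm (Sum.inl (heirOf g)) < π.symm (Sum.inr g) ∧
          (π.symm (Sum.inr g) : ℕ) + 2 ≤ g.1)) :
    ∀ k : ℕ, k ≤ n → k ≤ ℓ ∧
      ∀ j : Fin ℓ, (j : ℕ) < k → (π.symm (Sum.inl j) : ℕ) = (j : ℕ) := by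
  have hcon : SatisfiesGhostConstraint π heirOf := fun g => (hGhostCon g).imp And.left And.left
  have hheir (g : {g : ℕ // isGhost g}) : (heirOf g : ℕ) + 2 ≤ g.1 := by
    have := succ_le_left_of_chain hℓ hab ha1 hchain (heirOf g)
    have := (hheirOf g).1
    omega
  intro k
  induction k with
  | zero => exact fun _ => ⟨Nat.zero_le _, fun j hj => absurd hj (Nat.not_lt_zero _)⟩
  | succ k ih =>
    intro hk
    have hπ : FixesHeirsBelow π k := ih (by omega)
    have hfree (j : Fin ℓ) (v : ℕ) (h₁ : a j < v) (h₂ : v < b j) : k + 1 < v :=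
      hπ.add_one_lt_ghost hcon hheir ⟨v, (hGhost v).2 ⟨j, h₁, h₂⟩⟩
    have hshort (g : {g : ℕ // isGhost g}) (hg : (heirOf g : ℕ) < k) : g.1 ≤ k + 1 := by
      have := right_eq_of_lt_interior hℓ hab ha1 hchain hfree (heirOf g) (by omega)
      have := (hheirOf g).2
      omega
    obtain ⟨j, hj⟩ := hπ.exists_apply_eq_inl hcon hheir hshort hk
    exact hπ.succ hHeirOrder hj
end

section
/- In the setup of the no-ghosts lemma, suppose the inductive hypothesis π(I_j) = H_j holds for all j ≤ k−1. Then every heir H_j with j ≤ k−1 has no ghosts; equivalently, H_j = [j, j+1] is a trivial interval for all j ≤ k−1. -/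
/-!
Induction on `j`. If the heir `H_j = [j+1, b_j]` (0-indexed) starts right after its predecessor and
its particle is `π⁻¹(H_j) = [j+1, j+2]`, then `j + 2` cannot be interior to `H_j`: it would be a ghost
of `H_j` sitting on an endpoint of the particle of its own heir, whereas the ghost constraint puts every
ghost strictly to the left or strictly to the right of that particle. Hence `b_j = j + 2`, the next heir
starts at `j + 2`, and an interval `[j+1, j+2]` has no interior points left for ghosts.
-/

open Function

section IntervalChain

variable {ℓ : ℕ} {a b : Fin ℓ → ℕ}

theorem strictMono_left_of_chain (hab : ∀ j, a j < b j)
    (hchain : ∀ (j : Fin ℓ) (hj : (j : ℕ) + 1 < ℓ), b j = a ⟨(j : ℕ) + 1, hj⟩) :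
    StrictMono a := by
  cases ℓ with
  | zero => exact fun i => i.elim0
  | succ m =>
    refine Fin.strictMono_iff_lt_succ.2 fun i => ?_
    have hi := hchain i.castSucc (by simp)
    exact (hab i.castSucc).trans_eq hi

theorem right_le_left_of_chain (hab : ∀ j, a j < b j)
    (hchain : ∀ (j : Fin ℓ) (hj : (j : ℕ) + 1 < ℓ), b j = a ⟨(j : ℕ) + 1, hj⟩)
    {i j : Fin ℓ} (hij : i < j) : b i ≤ a j := by
  rw [hchain i (by omega)]
  exact (strictMono_left_of_chain hab hchain).monotone (Fin.mk_le_of_le_val hij)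

theorem pairwise_disjoint_Ioo_of_chain (hab : ∀ j, a j < b j)
    (hchain : ∀ (j : Fin ℓ) (hj : (j : ℕ) + 1 < ℓ), b j = a ⟨(j : ℕ) + 1, hj⟩) :
    Pairwise (Disjoint on fun j => Set.Ioo (a j) (b j)) := by
  have key : ∀ {i j : Fin ℓ}, i < j → Disjoint (Set.Ioo (a i) (b i)) (Set.Ioo (a j) (b j)) :=
    fun hij => Set.disjoint_left.2 fun _ hx hy =>
      (hx.2.trans_le (right_le_left_of_chain hab hchain hij)).not_gt hy.1
  intro i j hij
  rcases hij.lt_or_gt with h | h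
  · exact key h
  · exact (key h).symm

theorem eq_unit_of_chain (hchain : ∀ (j : Fin ℓ) (hj : (j : ℕ) + 1 < ℓ), b j = a ⟨(j : ℕ) + 1, hj⟩)
    (hℓ : 0 < ℓ) (ha : a ⟨0, hℓ⟩ = 1) {m : ℕ}
    (hstep : ∀ j : Fin ℓ, (j : ℕ) < m → a j = (j : ℕ) + 1 → b j = (j : ℕ) + 2) :
    ∀ j : Fin ℓ, (j : ℕ) < m → a j = (j : ℕ) + 1 ∧ b j = (j : ℕ) + 2 := by
  have left : ∀ i (hi : i < ℓ), i < m → a ⟨i, hi⟩ = i + 1 := by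
    intro i
    induction i with
    | zero => exact fun _ _ => ha
    | succ i ih =>
      intro hi him
      rw [← hchain ⟨i, by omega⟩ hi]
      exact hstep ⟨i, by omega⟩ (Nat.lt_of_succ_lt him) (ih (by omega) (by omega))
  exact fun j hj => ⟨left j j.isLt hj, hstep j hj (left j j.isLt hj)⟩

end IntervalChain

/-- Particle `p : Fin n` stands for the interval `[p + 1, p + 2]`. -/
theorem notMem_Icc_of_ghost_constraint {n g : ℕ} {q p : Fin n}
    (h : Xor (g ≤ (q : ℕ) + 1 ∧ q < p) (p < q ∧ (q : ℕ) + 2 ≤ g)) :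
    g ∉ Set.Icc ((p : ℕ) + 1) ((p : ℕ) + 2) := by
  rintro ⟨hpg, hgp⟩
  rcases h.or with ⟨hgq, hqp⟩ | ⟨hpq, hqg⟩
  · exact absurd hqp (by rw [Fin.lt_def]; omega)
  · exact absurd hpq (by rw [Fin.lt_def]; omega)

theorem notMem_Ioo_of_mem_heir_particle {n ℓ : ℕ} {a b : Fin ℓ → ℕ}
    (hdisj : Pairwise (Disjoint on fun j => Set.Ioo (a j) (b j)))
    {isGhost : ℕ → Prop} (hGhost : ∀ g, (∃ j : Fin ℓ, a j < g ∧ g < b j) → isGhost g)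
    {heirOf : {g : ℕ // isGhost g} → Fin ℓ}
    (hheirOf : ∀ g : {g : ℕ // isGhost g}, a (heirOf g) < g.1 ∧ g.1 < b (heirOf g))
    {π : Fin n ≃ (Fin ℓ ⊕ {g : ℕ // isGhost g})}
    (hGhostCon : ∀ g : {g : ℕ // isGhost g},
      Xor
        (g.1 ≤ (π.symm (Sum.inr g) : ℕ) + 1 ∧
          π.symm (Sum.inr g) < π.symm (Sum.inl (heirOf g)))
        (π.symm (Sum.inl (heirOf g)) < π.symm (Sum.inr g) ∧
          (π.symm (Sum.inr g) : ℕ) + 2 ≤ g.1))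
    (j : Fin ℓ) {x : ℕ}
    (hx : x ∈ Set.Icc ((π.symm (Sum.inl j) : ℕ) + 1) ((π.symm (Sum.inl j) : ℕ) + 2)) :
    x ∉ Set.Ioo (a j) (b j) := by
  intro hxj
  let g : {g : ℕ // isGhost g} := ⟨x, hGhost x ⟨j, hxj⟩⟩
  have heir : heirOf g = j := hdisj.eq (Set.not_disjoint_iff.2 ⟨x, hheirOf g, hxj⟩)
  exact notMem_Icc_of_ghost_constraint (hGhostCon g) (heir ▸ hx)

/-- Step 1 of the inductive argument: if `π(I_j) = H_j` for all (1-indexed)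
`j ≤ k - 1` (i.e. 0-indexed `j` with `j + 2 ≤ k`), then every heir `H_j` with
`j ≤ k - 1` has no ghosts, and equivalently `H_j = [j, j+1]` is trivial. -/
theorem existing_heirs_have_no_ghosts
    (n ℓ k : ℕ) (hℓ : 1 ≤ ℓ)
    (a b : Fin ℓ → ℕ)
    (hab : ∀ j, a j < b j)
    (ha1 : a ⟨0, hℓ⟩ = 1)
    (hchain : ∀ (j : Fin ℓ) (hj : (j : ℕ) + 1 < ℓ), b j = a ⟨(j : ℕ) + 1, hj⟩)
    (isGhost : ℕ → Prop)
    (hGhost : ∀ g, isGhost g ↔ ∃ j : Fin ℓ, a j < g ∧ g < b j)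
    (heirOf : {g : ℕ // isGhost g} → Fin ℓ)
    (hheirOf : ∀ g : {g : ℕ // isGhost g}, a (heirOf g) < g.1 ∧ g.1 < b (heirOf g))
    (π : Fin n ≃ (Fin ℓ ⊕ {g : ℕ // isGhost g}))
    (hGhostCon : ∀ g : {g : ℕ // isGhost g},
      Xor'
        (g.1 ≤ (π.symm (Sum.inr g) : ℕ) + 1 ∧
          π.symm (Sum.inr g) < π.symm (Sum.inl (heirOf g)))
        (π.symm (Sum.inl (heirOf g)) < π.symm (Sum.inr g) ∧
          (π.symm (Sum.inr g) : ℕ) + 2 ≤ g.1))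
    -- inductive hypothesis: π(I_j) = H_j for all j ≤ k − 1 (1-indexed)
    (hind : ∀ j : Fin ℓ, (j : ℕ) + 2 ≤ k → (π.symm (Sum.inl j) : ℕ) = (j : ℕ)) :
    ∀ j : Fin ℓ, (j : ℕ) + 2 ≤ k →
      (a j = (j : ℕ) + 1 ∧ b j = (j : ℕ) + 2) ∧
        ∀ g : {g : ℕ // isGhost g}, heirOf g ≠ j := by
  have hdisj := pairwise_disjoint_Ioo_of_chain hab hchain
  have hunit : ∀ i : Fin ℓ, (i : ℕ) < k - 1 → a i = (i : ℕ) + 1 → b i = (i : ℕ) + 2 := by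
    intro i hik hai
    have hπi := hind i (by omega)
    have hright := notMem_Ioo_of_mem_heir_particle hdisj (fun g => (hGhost g).2) hheirOf
      hGhostCon i (x := (i : ℕ) + 2) ⟨by omega, by omega⟩
    rw [Set.mem_Ioo, not_and_or] at hright
    have := hab i
    omega
  intro j hjk
  obtain ⟨haj, hbj⟩ := eq_unit_of_chain hchain hℓ ha1 hunit j (by omega)
  refine ⟨⟨haj, hbj⟩, fun g hg => ?_⟩
  have hg_mem := hheirOf g
  rw [hg] at hg_mem
  omega
end

section
/- Crossings must exist: in the setup of the no-ghosts lemma, suppose additionally that the roles are assigned final positions compatible with label order (role r ◁ role r' implies y_r < y_{r'}) and each path P_I ends at y_{π(I)}. If G is nonempty (there is at least one ghost role) and π satisfies the candidacy condition (ε(g) = δ_π(g) for all ghosts g), then some two paths P_I, P_J must meet. Equivalently: there is no order-preserving bijection (one with π⁻¹(H_1) ◁ ... ◁ π⁻¹(H_ℓ) and the ghost constraint) when G ≠ ∅. -/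
/-!
Let `g₀` be the least ghost and `h₀` its heir. Every number below `g₀` is an endpoint, so the
intervals before `h₀` have length one and `g₀ = h₀ + 2`; every other ghost is larger and has
heir `≥ h₀`. Since heir positions are strictly monotone, `j ≤ pos j`, and the ghost constraints
then give `pos h₀ ≥ h₀ + 2` and `pos g ≥ h₀ + 1` for every ghost `g`. So positions `0, …, h₀`
are all taken by heirs. The heir at position `h₀` precedes `h₀`, so its index is `< h₀`; but
only heirs stand before it, which forces its index to be `≥ h₀`.
-/

open Finset

namespace Fin

variable {m k : ℕ} {f : Fin m → Fin k}

theorem val_le_val_of_strictMono (hf : StrictMono f) (j : Fin m) : (j : ℕ) ≤ f j :=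
  calc (j : ℕ) = #((Iio j).image f) := by rw [card_image_of_injective _ hf.injective, card_Iio]
    _ ≤ #(Iio (f j)) := card_le_card fun p hp => by
        obtain ⟨i, hi, rfl⟩ := mem_image.mp hp
        exact mem_Iio.mpr (hf (mem_Iio.mp hi))
    _ = f j := card_Iio _

theorem val_le_of_strictMono_of_Iio_subset_range (hf : StrictMono f) {j : Fin m}
    (hrange : Set.Iio (f j) ⊆ Set.range f) : (f j : ℕ) ≤ j :=
  calc (f j : ℕ) = #(Iio (f j)) := (card_Iio _).symm
    _ ≤ #((Iio j).image f) := card_le_card fun p hp => by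
        obtain ⟨i, rfl⟩ := hrange (mem_Iio.mp hp)
        exact mem_image_of_mem f (mem_Iio.mpr (hf.lt_iff_lt.mp (mem_Iio.mp hp)))
    _ ≤ #(Iio j) := card_image_le
    _ = j := card_Iio _

end Fin

namespace IntervalChain

variable {ℓ : ℕ} {a b : Fin ℓ → ℕ}
  (hchain : ∀ (j : Fin ℓ) (hj : (j : ℕ) + 1 < ℓ), b j = a ⟨(j : ℕ) + 1, hj⟩)
include hchain

theorem b_le_a_of_lt (hab : ∀ j, a j < b j) {i j : Fin ℓ} (hij : i < j) : b i ≤ a j := by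
  obtain ⟨k, hk⟩ := j
  induction k with
  | zero => exact absurd (Fin.lt_def.mp hij) (Nat.not_lt_zero _)
  | succ k ih =>
    have hk' : k < ℓ := by omega
    have hik : (i : ℕ) < k + 1 := Fin.lt_def.mp hij
    rw [← hchain ⟨k, hk'⟩ hk]
    rcases Nat.lt_succ_iff_lt_or_eq.mp hik with hik | hik
    · exact (ih hk' (Fin.lt_def.mpr hik)).trans (hab _).le
    · exact le_of_eq (congrArg b (Fin.ext hik))

theorem a_eq_a_zero_add_of_unit_gaps (j : Fin ℓ) (hunit : ∀ i < j, b i = a i + 1) :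
    a j = a ⟨0, j.pos⟩ + j := by
  obtain ⟨k, hk⟩ := j
  induction k with
  | zero => rfl
  | succ k ih =>
    have hk' : k < ℓ := by omega
    have hlt : (⟨k, hk'⟩ : Fin ℓ) < ⟨k + 1, hk⟩ := Fin.lt_def.mpr (Nat.lt_succ_self k)
    rw [← hchain ⟨k, hk'⟩ hk, hunit _ hlt, ih hk' fun i hi => hunit i (hi.trans hlt)]
    rfl

theorem exists_least_ghost (hℓ : 1 ≤ ℓ) (hab : ∀ j, a j < b j) (ha1 : a ⟨0, hℓ⟩ = 1)
    {isGhost : ℕ → Prop} (hGhost : ∀ g, isGhost g ↔ ∃ j : Fin ℓ, a j < g ∧ g < b j)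
    {heirOf : {g : ℕ // isGhost g} → Fin ℓ}
    (hheirOf : ∀ g : {g : ℕ // isGhost g}, a (heirOf g) < g.1 ∧ g.1 < b (heirOf g))
    (hne : ∃ g, isGhost g) :
    ∃ g₀ : {g : ℕ // isGhost g}, g₀.1 = heirOf g₀ + 2 ∧
      ∀ g : {g : ℕ // isGhost g}, g₀.1 ≤ g.1 ∧ heirOf g₀ ≤ heirOf g := by
  classical
  let g₀ : {g : ℕ // isGhost g} := ⟨Nat.find hne, Nat.find_spec hne⟩
  have hleast : ∀ g, isGhost g → g₀.1 ≤ g := fun g hg => Nat.find_min' hne hg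
  have hh₀ := hheirOf g₀
  have hunit : ∀ i < heirOf g₀, b i = a i + 1 := by
    intro i hi
    have hbi := b_le_a_of_lt hchain hab hi
    have := hab i
    by_contra hgap
    have := hleast (a i + 1) ((hGhost _).2 ⟨i, by omega, by omega⟩)
    omega
  have ha : a (heirOf g₀) = heirOf g₀ + 1 := by
    rw [a_eq_a_zero_add_of_unit_gaps hchain _ hunit, ha1, add_comm]
  refine ⟨g₀, ?_, fun g => ⟨hleast g g.2, ?_⟩⟩
  · have := hleast (a (heirOf g₀) + 1) ((hGhost _).2 ⟨heirOf g₀, by omega, by omega⟩)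
    omega
  · by_contra! hlt
    have := b_le_a_of_lt hchain hab hlt
    have := hleast g g.2
    have := hheirOf g
    omega

end IntervalChain

theorem false_of_heirOrder_of_ghostConstraint {n ℓ : ℕ} {G : Type*}
    (π : Fin n ≃ (Fin ℓ ⊕ G)) (val : G → ℕ) (heir : G → Fin ℓ)
    (hHeirOrder : StrictMono fun j : Fin ℓ => π.symm (Sum.inl j))
    (hGhostCon : ∀ g : G,
      (val g ≤ (π.symm (Sum.inr g) : ℕ) + 1 ∧ π.symm (Sum.inr g) < π.symm (Sum.inl (heir g))) ∨
        (π.symm (Sum.inl (heir g)) < π.symm (Sum.inr g) ∧ (π.symm (Sum.inr g) : ℕ) + 2 ≤ val g))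
    (g₀ : G) (hval₀ : val g₀ = heir g₀ + 2) (hleast : ∀ g, val g₀ ≤ val g ∧ heir g₀ ≤ heir g) :
    False := by
  have hpos_heir₀ : (heir g₀ : ℕ) + 2 ≤ π.symm (Sum.inl (heir g₀)) := by
    have := Fin.val_le_val_of_strictMono hHeirOrder (heir g₀)
    rcases hGhostCon g₀ with ⟨h1, h2⟩ | ⟨h1, h2⟩
    · rw [Fin.lt_def] at h2; omega
    · rw [Fin.lt_def] at h1; omega
  have hpos_ghost : ∀ g, (heir g₀ : ℕ) + 1 ≤ π.symm (Sum.inr g) := by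
    intro g
    have := Fin.le_def.mp (hHeirOrder.monotone (hleast g).2)
    rcases hGhostCon g with ⟨h1, h2⟩ | ⟨h1, h2⟩
    · have := (hleast g).1; omega
    · rw [Fin.lt_def] at h1; omega
  have hheir_at : ∀ p : Fin n, (p : ℕ) ≤ heir g₀ → ∃ j, π.symm (Sum.inl j) = p := by
    intro p hp
    rcases hπ : π p with j | g
    · exact ⟨j, by rw [← hπ, Equiv.symm_apply_apply]⟩
    · have := hpos_ghost g
      rw [← hπ, Equiv.symm_apply_apply] at this
      omega
  obtain ⟨j, hj⟩ := hheir_at ⟨heir g₀, by omega⟩ le_rfl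
  have hj_lt : j < heir g₀ := hHeirOrder.lt_iff_lt.mp (by rw [hj, Fin.lt_def, Fin.val_mk]; omega)
  have hj_ge := Fin.val_le_of_strictMono_of_Iio_subset_range hHeirOrder (j := j) fun p hp =>
    hheir_at p (Nat.le_of_lt (by simpa [hj, Fin.lt_def] using hp))
  rw [hj, Fin.val_mk] at hj_ge
  exact absurd hj_lt (not_lt.mpr (Fin.le_def.mpr hj_ge))

/-- Crossings must exist (purely combinatorial corollary): when the ghost set is
nonempty, no bijection satisfies the heir-ordering condition together with the
exactly-one ghost constraint. -/
theorem crossings_must_exist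
    (n ℓ : ℕ) (hℓ : 1 ≤ ℓ)
    (a b : Fin ℓ → ℕ)
    (hab : ∀ j, a j < b j)
    (ha1 : a ⟨0, hℓ⟩ = 1)
    (hchain : ∀ (j : Fin ℓ) (hj : (j : ℕ) + 1 < ℓ), b j = a ⟨(j : ℕ) + 1, hj⟩)
    (isGhost : ℕ → Prop)
    (hGhost : ∀ g, isGhost g ↔ ∃ j : Fin ℓ, a j < g ∧ g < b j)
    (heirOf : {g : ℕ // isGhost g} → Fin ℓ)
    (hheirOf : ∀ g : {g : ℕ // isGhost g}, a (heirOf g) < g.1 ∧ g.1 < b (heirOf g))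
    -- the ghost set is nonempty
    (hne : ∃ g, isGhost g)
    (π : Fin n ≃ (Fin ℓ ⊕ {g : ℕ // isGhost g}))
    (hHeirOrder : StrictMono fun j : Fin ℓ => π.symm (Sum.inl j))
    (hGhostCon : ∀ g : {g : ℕ // isGhost g},
      Xor'
        (g.1 ≤ (π.symm (Sum.inr g) : ℕ) + 1 ∧
          π.symm (Sum.inr g) < π.symm (Sum.inl (heirOf g)))
        (π.symm (Sum.inl (heirOf g)) < π.symm (Sum.inr g) ∧
          (π.symm (Sum.inr g) : ℕ) + 2 ≤ g.1)) :
    False := by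
  obtain ⟨g₀, hval₀, hleast⟩ :=
    IntervalChain.exists_least_ghost hchain hℓ hab ha1 hGhost hheirOf hne
  exact false_of_heirOrder_of_ghostConstraint π Subtype.val heirOf hHeirOrder
    (fun g => Xor.or (hGhostCon g)) g₀ hval₀ hleast
end
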